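/- arXiv:1711.11325 — 4 statements merged into one kernel-verified Lean document; each statement's English description precedes it below -/
import Mathlib

section
/- Let 0 ≤ σ₁ ≤ σ₂ with σ₂ > 1 and 0 ≤ θ < 1. Then there exists a constant C such that for all t > 0, ∫₀ᵗ ⟨t−τ⟩^{−σ₁} τ^{−θ} ⟨τ⟩^{θ−σ₂} dτ ≤ C ⟨t⟩^{−σ₁}, where ⟨s⟩ = (1+s²)^{1/2}. -/
open MeasureTheory Set intervalIntegral

namespace ConvSingAux

lemma one_le_base (x : ℝ) : (1:ℝ) ≤ 1 + x ^ 2 := by nlinarith [sq_nonneg x]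

lemma base_pos (x : ℝ) : (0:ℝ) < 1 + x ^ 2 := lt_of_lt_of_le one_pos (one_le_base x)

lemma factor_le_one (x : ℝ) {c : ℝ} (hc : c ≤ 0) : (1 + x ^ 2) ^ c ≤ 1 :=
  Real.rpow_le_one_of_one_le_of_nonpos (one_le_base x) hc

lemma sq_rpow {x : ℝ} (hx : 0 ≤ x) (c : ℝ) : (x ^ 2) ^ c = x ^ (2 * c) := by
  rw [← Real.rpow_two, ← Real.rpow_mul hx]

lemma anti_bound {A B k d : ℝ} (hd : 0 ≤ d) (hk : 0 < k) (hB : 0 < B)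
    (h : B / k ≤ A) : A ^ (-d) ≤ k ^ d * B ^ (-d) := by
  have hBk : 0 < B / k := div_pos hB hk
  calc A ^ (-d) ≤ (B / k) ^ (-d) :=
        Real.rpow_le_rpow_of_nonpos hBk h (by linarith)
    _ = k ^ d * B ^ (-d) := by
        rw [Real.rpow_neg hBk.le, Real.div_rpow hB.le hk.le, inv_div,
          Real.rpow_neg hB.le, div_eq_mul_inv]

end ConvSingAux

set_option maxHeartbeats 2000000

namespace ConvSingAux

lemma aux (σ₁ σ₂ θ β γ D : ℝ) (h0 : 0 ≤ σ₁) (h12 : σ₁ ≤ σ₂) (h2 : 1 < σ₂)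
    (hθ0 : 0 ≤ θ) (hθ1 : θ < 1) (hβ0 : 0 ≤ β) (hβσ : β ≤ σ₁)
    (hγ0 : 0 ≤ γ) (hγ : γ ≤ σ₂ - σ₁) (hD : 0 < D)
    (hInt : ∀ t : ℝ, 2 ≤ t → (∫ u in (1:ℝ)..(1 + t/2), u ^ (-β)) ≤ D * (1 + t^2) ^ (γ/2)) :
    ∃ C : ℝ, 0 < C ∧ ∀ t : ℝ, 0 < t →
      (∫ τ in (0:ℝ)..t,
          (1 + (t - τ) ^ 2) ^ (-(σ₁ / 2)) * τ ^ (-θ) * (1 + τ ^ 2) ^ ((θ - σ₂) / 2))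
        ≤ C * (1 + t ^ 2) ^ (-(σ₁ / 2)) := by
  have hθ' : (0:ℝ) < 1 - θ := by linarith
  set M₁ : ℝ := 1/(1-θ) + 1/(σ₂ - 1) with hM₁
  have hM₁pos : 0 < M₁ := add_pos (div_pos one_pos hθ') (div_pos one_pos (by linarith))
  set C₀ : ℝ := (2:ℝ)^(1-θ)/(1-θ) * 5^(σ₁/2) with hC₀
  set C₁ : ℝ := (4:ℝ)^(σ₁/2) * M₁ with hC₁
  set C₂ : ℝ := (2:ℝ)^(β/2) * 8^(θ/2) * 4^((σ₂-θ)/2) * D with hC₂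
  have hC₀pos : 0 < C₀ :=
    mul_pos (div_pos (Real.rpow_pos_of_pos two_pos _) hθ') (Real.rpow_pos_of_pos (by norm_num) _)
  have hC₁pos : 0 < C₁ := mul_pos (Real.rpow_pos_of_pos (by norm_num) _) hM₁pos
  have hC₂pos : 0 < C₂ :=
    mul_pos (mul_pos (mul_pos (Real.rpow_pos_of_pos two_pos _)
      (Real.rpow_pos_of_pos (by norm_num) _)) (Real.rpow_pos_of_pos (by norm_num) _)) hD
  refine ⟨C₀ + C₁ + C₂, by linarith, ?_⟩
  intro t ht
  set F : ℝ → ℝ := fun τ =>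
    (1 + (t - τ) ^ 2) ^ (-(σ₁ / 2)) * τ ^ (-θ) * (1 + τ ^ 2) ^ ((θ - σ₂) / 2) with hF
  set h₀ : ℝ → ℝ := fun τ => τ ^ (-θ) * (1 + τ ^ 2) ^ ((θ - σ₂) / 2) with hh₀
  have hexpθ : (-1:ℝ) < -θ := by linarith
  have hXpos : (0:ℝ) < (1 + t^2) ^ (-(σ₁/2)) := Real.rpow_pos_of_pos (base_pos t) _
  -- pointwise bounds valid for all nonneg τ
  have hF_le : ∀ x : ℝ, 0 ≤ x → F x ≤ x ^ (-θ) := by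
    intro x hx
    have hb : 0 ≤ x ^ (-θ) := Real.rpow_nonneg hx _
    have h1 : (1 + (t - x) ^ 2) ^ (-(σ₁ / 2)) ≤ 1 := factor_le_one _ (by linarith)
    have h2 : (1 + x ^ 2) ^ ((θ - σ₂) / 2) ≤ 1 := factor_le_one _ (by linarith)
    calc F x ≤ (1 + (t - x) ^ 2) ^ (-(σ₁ / 2)) * x ^ (-θ) * 1 := by
          apply mul_le_mul_of_nonneg_left h2
          exact mul_nonneg (Real.rpow_nonneg (base_pos _).le _) hb
      _ = (1 + (t - x) ^ 2) ^ (-(σ₁ / 2)) * x ^ (-θ) := by ring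
      _ ≤ 1 * x ^ (-θ) := mul_le_mul_of_nonneg_right h1 hb
      _ = x ^ (-θ) := one_mul _
  have hh₀_le : ∀ x : ℝ, 0 ≤ x → h₀ x ≤ x ^ (-θ) := by
    intro x hx
    have hb : 0 ≤ x ^ (-θ) := Real.rpow_nonneg hx _
    have h2 : (1 + x ^ 2) ^ ((θ - σ₂) / 2) ≤ 1 := factor_le_one _ (by linarith)
    calc h₀ x ≤ x ^ (-θ) * 1 := mul_le_mul_of_nonneg_left h2 hb
      _ = x ^ (-θ) := mul_one _
  have hh₀_nonneg : ∀ x : ℝ, 0 ≤ x → 0 ≤ h₀ x := by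
    intro x hx
    exact mul_nonneg (Real.rpow_nonneg hx _) (Real.rpow_nonneg (base_pos _).le _)
  have hF_nonneg : ∀ x : ℝ, 0 ≤ x → 0 ≤ F x := by
    intro x hx
    exact mul_nonneg (mul_nonneg (Real.rpow_nonneg (base_pos _).le _)
      (Real.rpow_nonneg hx _)) (Real.rpow_nonneg (base_pos _).le _)
  -- integrability
  have hFint : IntervalIntegrable F volume 0 t := by
    apply (intervalIntegrable_rpow' hexpθ (a := 0) (b := t)).mono_fun
    · exact (by fun_prop : Measurable F).aestronglyMeasurable.restrict
    · rw [Set.uIoc_of_le ht.le]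
      filter_upwards [ae_restrict_mem measurableSet_Ioc] with x hx
      rw [Real.norm_of_nonneg (hF_nonneg x hx.1.le),
        Real.norm_of_nonneg (Real.rpow_nonneg hx.1.le _)]
      exact hF_le x hx.1.le
  have hh₀int : ∀ b : ℝ, 0 < b → IntervalIntegrable h₀ volume 0 b := by
    intro b hb
    apply (intervalIntegrable_rpow' hexpθ (a := 0) (b := b)).mono_fun
    · exact (by fun_prop : Measurable h₀).aestronglyMeasurable.restrict
    · rw [Set.uIoc_of_le hb.le]
      filter_upwards [ae_restrict_mem measurableSet_Ioc] with x hx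
      rw [Real.norm_of_nonneg (hh₀_nonneg x hx.1.le),
        Real.norm_of_nonneg (Real.rpow_nonneg hx.1.le _)]
      exact hh₀_le x hx.1.le
  by_cases htwo : t ≤ 2
  · -- small time
    have key : (∫ τ in (0:ℝ)..t, F τ) ≤ ∫ τ in (0:ℝ)..t, τ ^ (-θ) := by
      apply integral_mono_on ht.le hFint (intervalIntegrable_rpow' hexpθ)
      intro x hx
      exact hF_le x hx.1
    have hval : (∫ τ in (0:ℝ)..t, τ ^ (-θ)) = t ^ (-θ+1) / (-θ+1) := by
      rw [integral_rpow (Or.inl hexpθ)]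
      rw [Real.zero_rpow (by linarith : (-θ+1) ≠ 0)]
      ring
    have hbd : t ^ (-θ+1) ≤ (2:ℝ) ^ (-θ+1) :=
      Real.rpow_le_rpow ht.le htwo (by linarith)
    have h5 : (5:ℝ)^(-(σ₁/2)) ≤ (1+t^2)^(-(σ₁/2)) :=
      Real.rpow_le_rpow_of_nonpos (base_pos t) (by nlinarith) (by linarith)
    have hC₀5 : (2:ℝ)^(1-θ)/(1-θ) = C₀ * 5^(-(σ₁/2)) := by
      rw [hC₀, Real.rpow_neg (by norm_num), mul_assoc,
        mul_inv_cancel₀ (ne_of_gt (Real.rpow_pos_of_pos (by norm_num) _)), mul_one]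
    calc (∫ τ in (0:ℝ)..t, F τ) ≤ t ^ (-θ+1) / (-θ+1) := by rw [← hval]; exact key
      _ ≤ (2:ℝ) ^ (-θ+1) / (-θ+1) := by
          gcongr
          linarith
      _ = (2:ℝ)^(1-θ)/(1-θ) := by rw [show -θ+1 = 1-θ by ring]
      _ = C₀ * 5^(-(σ₁/2)) := hC₀5
      _ ≤ C₀ * (1+t^2)^(-(σ₁/2)) := mul_le_mul_of_nonneg_left h5 hC₀pos.le
      _ ≤ (C₀ + C₁ + C₂) * (1+t^2)^(-(σ₁/2)) := by nlinarith
  · -- large time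
    push_neg at htwo
    have ht2 : (2:ℝ) ≤ t := htwo.le
    have ht1 : (1:ℝ) ≤ t/2 := by linarith
    have ht0 : (0:ℝ) < t/2 := by linarith
    have hF1 : IntervalIntegrable F volume 0 (t/2) := by
      apply hFint.mono_set'
      rw [Set.uIoc_of_le ht0.le, Set.uIoc_of_le ht.le]
      exact Set.Ioc_subset_Ioc_right (by linarith)
    have hF2 : IntervalIntegrable F volume (t/2) t := by
      apply hFint.mono_set'
      rw [Set.uIoc_of_le (by linarith : t/2 ≤ t), Set.uIoc_of_le ht.le]
      exact Set.Ioc_subset_Ioc_left (by linarith)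
    have hsplit : (∫ τ in (0:ℝ)..(t/2), F τ) + (∫ τ in (t/2)..t, F τ)
        = ∫ τ in (0:ℝ)..t, F τ := integral_add_adjacent_intervals hF1 hF2
    -- piece 1
    have hpt1 : ∀ x ∈ Icc (0:ℝ) (t/2),
        F x ≤ ((4:ℝ)^(σ₁/2) * (1+t^2)^(-(σ₁/2))) * h₀ x := by
      intro x hx
      have hd : (1+t^2)/4 ≤ 1 + (t - x)^2 := by
        have h1 : t/2 ≤ t - x := by linarith [hx.2]
        have h2 : (t/2)^2 ≤ (t-x)^2 := pow_le_pow_left₀ ht0.le h1 2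
        have h3 : (t/2)^2 = t^2/4 := by ring
        linarith
      have ha : (1 + (t - x) ^ 2) ^ (-(σ₁ / 2)) ≤ (4:ℝ)^(σ₁/2) * (1+t^2)^(-(σ₁/2)) :=
        anti_bound (by linarith) (by norm_num) (base_pos t) hd
      calc F x = (1 + (t - x) ^ 2) ^ (-(σ₁ / 2)) * h₀ x := by simp only [hF, hh₀]; ring
        _ ≤ ((4:ℝ)^(σ₁/2) * (1+t^2)^(-(σ₁/2))) * h₀ x :=
            mul_le_mul_of_nonneg_right ha (hh₀_nonneg x hx.1)
    have hint1 : (∫ τ in (0:ℝ)..(t/2), F τ) ≤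
        ((4:ℝ)^(σ₁/2) * (1+t^2)^(-(σ₁/2))) * ∫ τ in (0:ℝ)..(t/2), h₀ τ := by
      rw [← intervalIntegral.integral_const_mul]
      exact integral_mono_on ht0.le hF1 (((hh₀int (t/2) ht0)).const_mul _) hpt1
    have hh₀small : (∫ τ in (0:ℝ)..(1:ℝ), h₀ τ) ≤ 1/(1-θ) := by
      have : (∫ τ in (0:ℝ)..(1:ℝ), h₀ τ) ≤ ∫ τ in (0:ℝ)..(1:ℝ), τ ^ (-θ) := by
        apply integral_mono_on (by norm_num) ?_ (intervalIntegrable_rpow' hexpθ)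
        · intro x hx; exact hh₀_le x hx.1
        · apply (hh₀int (t/2) ht0).mono_set'
          rw [Set.uIoc_of_le (by norm_num : (0:ℝ) ≤ 1), Set.uIoc_of_le ht0.le]
          exact Set.Ioc_subset_Ioc_right ht1
      refine this.trans ?_
      rw [integral_rpow (Or.inl hexpθ), Real.zero_rpow (by linarith : (-θ+1) ≠ 0),
        Real.one_rpow]
      rw [show (1:ℝ) - θ = -θ+1 by ring]
      norm_num
    have hh₀tail : (∫ τ in (1:ℝ)..(t/2), h₀ τ) ≤ 1/(σ₂-1) := by
      have hmono : (∫ τ in (1:ℝ)..(t/2), h₀ τ) ≤ ∫ τ in (1:ℝ)..(t/2), τ ^ (-σ₂) := by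
        apply integral_mono_on ht1 ?_ ?_
        · intro x hx
          have hx0 : (0:ℝ) < x := lt_of_lt_of_le one_pos hx.1
          have e1 : (1+x^2)^((θ-σ₂)/2) ≤ (x^2)^((θ-σ₂)/2) :=
            Real.rpow_le_rpow_of_nonpos (by positivity) (by nlinarith) (by linarith)
          calc h₀ x ≤ x ^ (-θ) * (x^2)^((θ-σ₂)/2) :=
                mul_le_mul_of_nonneg_left e1 (Real.rpow_nonneg hx0.le _)
            _ = x ^ (-σ₂) := by
                rw [sq_rpow hx0.le, ← Real.rpow_add hx0]
                congr 1; ring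
        · apply (hh₀int (t/2) ht0).mono_set'
          rw [Set.uIoc_of_le ht1, Set.uIoc_of_le ht0.le]
          exact Set.Ioc_subset_Ioc_left (by norm_num)
        · apply intervalIntegrable_rpow (Or.inr ?_)
          rw [Set.uIcc_of_le ht1]
          rintro ⟨ha, -⟩; linarith
      refine hmono.trans ?_
      rw [integral_rpow (Or.inr ⟨by intro h; rw [neg_eq_iff_eq_neg] at h; linarith [h],
        by rw [Set.uIcc_of_le ht1]; rintro ⟨ha, -⟩; linarith⟩)]
      rw [Real.one_rpow]
      have hA : (0:ℝ) ≤ (t/2) ^ (-σ₂+1) := Real.rpow_nonneg ht0.le _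
      have heq : ((t/2) ^ (-σ₂+1) - 1) / (-σ₂+1) = (1 - (t/2) ^ (-σ₂+1)) / (σ₂-1) := by
        rw [div_eq_div_iff (by linarith : (-σ₂+1) ≠ (0:ℝ)) (by linarith : (σ₂-1) ≠ (0:ℝ))]
        ring
      rw [heq]
      gcongr
      · linarith
    have hh₀sum : (∫ τ in (0:ℝ)..(t/2), h₀ τ) ≤ M₁ := by
      have e : (∫ τ in (0:ℝ)..(1:ℝ), h₀ τ) + (∫ τ in (1:ℝ)..(t/2), h₀ τ)
          = ∫ τ in (0:ℝ)..(t/2), h₀ τ := by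
        apply integral_add_adjacent_intervals
        · apply (hh₀int (t/2) ht0).mono_set'
          rw [Set.uIoc_of_le (by norm_num : (0:ℝ) ≤ 1), Set.uIoc_of_le ht0.le]
          exact Set.Ioc_subset_Ioc_right ht1
        · apply (hh₀int (t/2) ht0).mono_set'
          rw [Set.uIoc_of_le ht1, Set.uIoc_of_le ht0.le]
          exact Set.Ioc_subset_Ioc_left (by norm_num)
      rw [← e, hM₁]
      exact add_le_add hh₀small hh₀tail
    have hpiece1 : (∫ τ in (0:ℝ)..(t/2), F τ) ≤ C₁ * (1+t^2)^(-(σ₁/2)) := by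
      refine hint1.trans ?_
      rw [hC₁]
      calc ((4:ℝ)^(σ₁/2) * (1+t^2)^(-(σ₁/2))) * ∫ τ in (0:ℝ)..(t/2), h₀ τ
          ≤ ((4:ℝ)^(σ₁/2) * (1+t^2)^(-(σ₁/2))) * M₁ := by
            apply mul_le_mul_of_nonneg_left hh₀sum (by positivity)
        _ = (4:ℝ)^(σ₁/2) * M₁ * (1+t^2)^(-(σ₁/2)) := by ring
    -- piece 2
    have hpt2 : ∀ x ∈ Icc (t/2) t,
        F x ≤ ((2:ℝ)^(β/2) * 8^(θ/2) * 4^((σ₂-θ)/2) *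
          ((1+t^2)^(-(θ/2)) * (1+t^2)^(-((σ₂-θ)/2)))) * (1+(t-x)) ^ (-β) := by
      intro x hx
      have hx0 : (0:ℝ) < x := lt_of_lt_of_le ht0 hx.1
      have hs0 : (0:ℝ) ≤ t - x := by linarith [hx.2]
      have ha1 : (1 + (t - x) ^ 2) ^ (-(σ₁ / 2)) ≤ (1 + (t - x) ^ 2) ^ (-(β / 2)) :=
        Real.rpow_le_rpow_of_exponent_le (one_le_base _) (by linarith)
      have ha2 : (1 + (t - x) ^ 2) ^ (-(β / 2)) ≤ (2:ℝ)^(β/2) * ((1+(t-x))^2) ^ (-(β/2)) := by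
        apply anti_bound (by linarith) (by norm_num) (by positivity)
        nlinarith [sq_nonneg (1 - (t - x))]
      have ha3 : ((1+(t-x))^2) ^ (-(β/2)) = (1+(t-x)) ^ (-β) := by
        rw [sq_rpow (by linarith : (0:ℝ) ≤ 1+(t-x))]
        congr 1; ring
      have ha : (1 + (t - x) ^ 2) ^ (-(σ₁ / 2)) ≤ (2:ℝ)^(β/2) * (1+(t-x)) ^ (-β) := by
        rw [← ha3]; exact ha1.trans ha2
      have hb0 : x ^ (-θ) = (x^2) ^ (-(θ/2)) := by
        rw [sq_rpow hx0.le]; congr 1; ring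
      have hb1 : (x^2) ^ (-(θ/2)) ≤ (8:ℝ)^(θ/2) * (1+t^2) ^ (-(θ/2)) := by
        apply anti_bound (by linarith) (by norm_num) (base_pos t)
        nlinarith [sq_nonneg (x - t/2), hx.1, ht2, ht0.le, sq_nonneg (t-2)]
      have hb : x ^ (-θ) ≤ (8:ℝ)^(θ/2) * (1+t^2) ^ (-(θ/2)) := by rw [hb0]; exact hb1
      have hc0 : (1 + x ^ 2) ^ ((θ - σ₂) / 2) = (1 + x ^ 2) ^ (-((σ₂-θ)/2)) := by
        congr 1; ring
      have hc1 : (1 + x ^ 2) ^ (-((σ₂-θ)/2)) ≤ (4:ℝ)^((σ₂-θ)/2) * (1+t^2) ^ (-((σ₂-θ)/2)) := by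
        apply anti_bound (by linarith) (by norm_num) (base_pos t)
        nlinarith [sq_nonneg (x - t/2), hx.1, ht0.le]
      have hc : (1 + x ^ 2) ^ ((θ - σ₂) / 2) ≤ (4:ℝ)^((σ₂-θ)/2) * (1+t^2) ^ (-((σ₂-θ)/2)) := by
        rw [hc0]; exact hc1
      calc F x = (1 + (t - x) ^ 2) ^ (-(σ₁ / 2)) * x ^ (-θ) * (1 + x ^ 2) ^ ((θ - σ₂) / 2) := rfl
        _ ≤ ((2:ℝ)^(β/2) * (1+(t-x)) ^ (-β)) * ((8:ℝ)^(θ/2) * (1+t^2) ^ (-(θ/2)))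
              * ((4:ℝ)^((σ₂-θ)/2) * (1+t^2) ^ (-((σ₂-θ)/2))) := by
            apply mul_le_mul (mul_le_mul ha hb (Real.rpow_nonneg hx0.le _) (by positivity))
              hc (Real.rpow_nonneg (base_pos _).le _) (by positivity)
        _ = ((2:ℝ)^(β/2) * 8^(θ/2) * 4^((σ₂-θ)/2) *
          ((1+t^2)^(-(θ/2)) * (1+t^2)^(-((σ₂-θ)/2)))) * (1+(t-x)) ^ (-β) := by ring
    have hcont : IntervalIntegrable (fun x : ℝ => (1+(t-x)) ^ (-β)) volume (t/2) t := by
      apply ContinuousOn.intervalIntegrable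
      apply ContinuousOn.rpow_const
      · fun_prop
      · intro x hx
        rw [Set.uIcc_of_le (by linarith : t/2 ≤ t)] at hx
        exact Or.inl (by nlinarith [hx.2] : (1:ℝ)+(t-x) ≠ 0)
    have hK2 : (0:ℝ) ≤ (2:ℝ)^(β/2) * 8^(θ/2) * 4^((σ₂-θ)/2) *
          ((1+t^2)^(-(θ/2)) * (1+t^2)^(-((σ₂-θ)/2))) := by positivity
    have hint2 : (∫ τ in (t/2)..t, F τ) ≤
        ((2:ℝ)^(β/2) * 8^(θ/2) * 4^((σ₂-θ)/2) * ((1+t^2)^(-(θ/2)) * (1+t^2)^(-((σ₂-θ)/2))))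
          * ∫ x in (t/2)..t, (1+(t-x)) ^ (-β) := by
      rw [← intervalIntegral.integral_const_mul]
      exact integral_mono_on (by linarith) hF2 (hcont.const_mul _) hpt2
    have hchange : (∫ x in (t/2)..t, (1+(t-x)) ^ (-β)) = ∫ u in (1:ℝ)..(1 + t/2), u ^ (-β) := by
      have e1 : (∫ x in (t/2)..t, (1+(t-x)) ^ (-β))
          = ∫ x in (t - t)..(t - t/2), (1+x) ^ (-β) :=
        intervalIntegral.integral_comp_sub_left (fun u : ℝ => (1+u) ^ (-β)) t
      rw [e1, sub_self, show t - t/2 = t/2 by ring]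
      have e2 : (∫ x in (0:ℝ)..(t/2), (1+x) ^ (-β))
          = ∫ u in (1+(0:ℝ))..(1 + t/2), u ^ (-β) :=
        intervalIntegral.integral_comp_add_left (fun u : ℝ => u ^ (-β)) 1
      rw [e2, add_zero]
    have hpiece2 : (∫ τ in (t/2)..t, F τ) ≤ C₂ * (1+t^2)^(-(σ₁/2)) := by
      refine hint2.trans ?_
      rw [hchange]
      calc ((2:ℝ)^(β/2) * 8^(θ/2) * 4^((σ₂-θ)/2) * ((1+t^2)^(-(θ/2)) * (1+t^2)^(-((σ₂-θ)/2))))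
            * ∫ u in (1:ℝ)..(1 + t/2), u ^ (-β)
          ≤ ((2:ℝ)^(β/2) * 8^(θ/2) * 4^((σ₂-θ)/2) * ((1+t^2)^(-(θ/2)) * (1+t^2)^(-((σ₂-θ)/2))))
            * (D * (1 + t^2) ^ (γ/2)) := mul_le_mul_of_nonneg_left (hInt t ht2) hK2
        _ = C₂ * ((1+t^2)^(-(θ/2)) * (1+t^2)^(-((σ₂-θ)/2)) * (1+t^2)^(γ/2)) := by
            rw [hC₂]; ring
        _ = C₂ * (1+t^2) ^ (-(θ/2) + -((σ₂-θ)/2) + γ/2) := by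
            rw [Real.rpow_add (base_pos t), Real.rpow_add (base_pos t)]
        _ ≤ C₂ * (1+t^2) ^ (-(σ₁/2)) :=
            mul_le_mul_of_nonneg_left
              (Real.rpow_le_rpow_of_exponent_le (one_le_base t) (by linarith)) hC₂pos.le
    calc (∫ τ in (0:ℝ)..t, F τ)
        = (∫ τ in (0:ℝ)..(t/2), F τ) + (∫ τ in (t/2)..t, F τ) := hsplit.symm
      _ ≤ C₁ * (1+t^2)^(-(σ₁/2)) + C₂ * (1+t^2)^(-(σ₁/2)) := add_le_add hpiece1 hpiece2
      _ ≤ (C₀ + C₁ + C₂) * (1+t^2)^(-(σ₁/2)) := by nlinarith [mul_pos hC₀pos hXpos]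

end ConvSingAux

/-- Convolution-in-time inequality with an integrable singularity at the origin:
for `0 ≤ σ₁ ≤ σ₂`, `σ₂ > 1`, `0 ≤ θ < 1`,
`∫₀ᵗ ⟨t−τ⟩^{−σ₁} τ^{−θ} ⟨τ⟩^{θ−σ₂} dτ ≤ C ⟨t⟩^{−σ₁}`, with `⟨s⟩ = (1+s²)^{1/2}`. -/
theorem convolution_decay_estimate_singular (σ₁ σ₂ θ : ℝ) (h0 : 0 ≤ σ₁)
    (h12 : σ₁ ≤ σ₂) (h2 : 1 < σ₂) (hθ0 : 0 ≤ θ) (hθ1 : θ < 1) :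
    ∃ C : ℝ, 0 < C ∧ ∀ t : ℝ, 0 < t →
      (∫ τ in (0:ℝ)..t,
          (1 + (t - τ) ^ 2) ^ (-(σ₁ / 2)) * τ ^ (-θ) * (1 + τ ^ 2) ^ ((θ - σ₂) / 2))
        ≤ C * (1 + t ^ 2) ^ (-(σ₁ / 2)) := by
  rcases le_or_gt ((1+σ₂)/2) σ₁ with hcase | hcase
  · -- large σ₁ : use exponent (1+σ₂)/2 > 1, convergent tail integral
    apply ConvSingAux.aux σ₁ σ₂ θ ((1+σ₂)/2) 0 (1/((1+σ₂)/2 - 1)) h0 h12 h2 hθ0 hθ1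
      (by linarith) hcase le_rfl (by linarith) (div_pos one_pos (by linarith))
    intro t ht2
    have h1X : (1:ℝ) ≤ 1 + t/2 := by linarith
    rw [integral_rpow (Or.inr ⟨by intro h; linarith,
      by rw [Set.uIcc_of_le h1X]; rintro ⟨ha, -⟩; linarith⟩)]
    rw [Real.one_rpow, show ((0:ℝ)/2) = 0 by norm_num, Real.rpow_zero, mul_one]
    have hA0 : (0:ℝ) ≤ (1+t/2) ^ (-((1+σ₂)/2)+1) := Real.rpow_nonneg (by linarith) _
    have heq : ((1+t/2) ^ (-((1+σ₂)/2)+1) - 1) / (-((1+σ₂)/2)+1)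
        = (1 - (1+t/2) ^ (-((1+σ₂)/2)+1)) / ((1+σ₂)/2-1) := by
      rw [div_eq_div_iff (by linarith : (-((1+σ₂)/2)+1) ≠ (0:ℝ))
        (by linarith : ((1+σ₂)/2-1) ≠ (0:ℝ))]
      ring
    rw [heq]
    gcongr
    · linarith
    · linarith
  · -- small σ₁ : use exponent β < 1
    have hσlt : σ₁ < σ₂ := by linarith
    set a : ℝ := max 0 (σ₁+1-σ₂) with ha
    have ha0 : 0 ≤ a := le_max_left _ _
    have ha1 : a < 1 := max_lt (by norm_num) (by linarith)
    set β : ℝ := min σ₁ ((1+a)/2) with hβ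
    have hβ0 : 0 ≤ β := le_min h0 (by linarith)
    have hβσ : β ≤ σ₁ := min_le_left _ _
    have hβ1 : β < 1 := lt_of_le_of_lt (min_le_right _ _) (by linarith)
    have haβ : a ≤ β := le_min (max_le h0 (by linarith)) (by linarith)
    have hstep : σ₁ + 1 - σ₂ ≤ β := le_trans (le_max_right _ _) haβ
    apply ConvSingAux.aux σ₁ σ₂ θ β (1-β) ((2:ℝ)^((1-β)/2) * (1/(1-β))) h0 h12 h2 hθ0 hθ1
      hβ0 hβσ (by linarith) (by linarith)
      (mul_pos (Real.rpow_pos_of_pos two_pos _) (div_pos one_pos (by linarith)))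
    intro t ht2
    have h1X : (1:ℝ) ≤ 1 + t/2 := by linarith
    rw [integral_rpow (Or.inl (by linarith : (-1:ℝ) < -β))]
    rw [Real.one_rpow]
    have hA0 : (0:ℝ) ≤ (1+t/2) ^ (-β+1) := Real.rpow_nonneg (by linarith) _
    have hbound : (1+t/2) ^ (-β+1) ≤ (2:ℝ)^((1-β)/2) * (1+t^2)^((1-β)/2) := by
      have e1 : (1+t/2) ^ (-β+1) = ((1+t/2)^2) ^ ((1-β)/2) := by
        rw [ConvSingAux.sq_rpow (by linarith : (0:ℝ) ≤ 1+t/2)]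
        congr 1; ring
      rw [e1]
      have e2 : ((1+t/2)^2 : ℝ) ≤ 2*(1+t^2) := by nlinarith [sq_nonneg (t-1)]
      calc ((1+t/2)^2 : ℝ) ^ ((1-β)/2) ≤ (2*(1+t^2)) ^ ((1-β)/2) :=
            Real.rpow_le_rpow (by positivity) e2 (by linarith)
        _ = (2:ℝ)^((1-β)/2) * (1+t^2)^((1-β)/2) :=
            Real.mul_rpow (by norm_num) (by positivity)
    calc ((1+t/2) ^ (-β+1) - 1) / (-β+1) ≤ (1+t/2) ^ (-β+1) / (-β+1) := by
          gcongr
          · linarith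
          · linarith
      _ ≤ ((2:ℝ)^((1-β)/2) * (1+t^2)^((1-β)/2)) / (-β+1) := by
          gcongr
          linarith
      _ = (2:ℝ)^((1-β)/2) * (1/(1-β)) * (1+t^2)^((1-β)/2) := by
          rw [show -β+1 = 1-β by ring]; ring
end

section
/- Let p ≥ 1, B ≥ 0, T > 0, and let X : [0,T] → [0,∞) be continuous such that Xᵖ is differentiable and satisfies (1/p) (d/dt) Xᵖ + B Xᵖ ≤ A X^{p−1} on [0,T] for some measurable nonnegative function A. For δ > 0 set X_δ := (Xᵖ + δᵖ)^{1/p}. Then X_δ is differentiable and satisfies (d/dt) X_δ + B X_δ ≤ A + B δ on [0,T]. -/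
open MeasureTheory Set

/-- Regularization lemma (Lemma 5.2): if `X ≥ 0` is continuous on `[0,T]`, `Xᵖ` is
differentiable with `(1/p) (Xᵖ)' + B Xᵖ ≤ A X^{p−1}`, then for `δ > 0` the function
`X_δ = (Xᵖ + δᵖ)^{1/p}` is differentiable and `(X_δ)' + B X_δ ≤ A + Bδ` on `[0,T]`. -/
theorem regularized_differential_inequality (p B T δ : ℝ) (hp : 1 ≤ p) (hB : 0 ≤ B)
    (hT : 0 < T) (hδ : 0 < δ) (X A D : ℝ → ℝ)
    (hXcont : ContinuousOn X (Icc 0 T))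
    (hXnonneg : ∀ t ∈ Icc (0:ℝ) T, 0 ≤ X t)
    (hAmeas : Measurable A) (hAnonneg : ∀ t, 0 ≤ A t)
    (hderiv : ∀ t ∈ Icc (0:ℝ) T, HasDerivAt (fun s => X s ^ p) (D t) t)
    (hineq : ∀ t ∈ Icc (0:ℝ) T,
      (1 / p) * D t + B * X t ^ p ≤ A t * X t ^ (p - 1)) :
    ∀ t ∈ Icc (0:ℝ) T, ∃ d : ℝ,
      HasDerivAt (fun s => (X s ^ p + δ ^ p) ^ (1 / p)) d t ∧
      d + B * (X t ^ p + δ ^ p) ^ (1 / p) ≤ A t + B * δ := by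
  intro t ht
  have hp0 : (0:ℝ) < p := lt_of_lt_of_le one_pos hp
  have hXt : 0 ≤ X t := hXnonneg t ht
  have hXp : 0 ≤ X t ^ p := Real.rpow_nonneg hXt p
  have hδp : 0 < δ ^ p := Real.rpow_pos_of_pos hδ p
  set Y : ℝ := X t ^ p + δ ^ p with hYdef
  have hY : 0 < Y := by positivity
  have hd : HasDerivAt (fun s => (X s ^ p + δ ^ p) ^ (1/p))
      (D t * (1/p) * Y ^ (1/p - 1)) t := by
    have h1 : HasDerivAt (fun s => X s ^ p + δ ^ p) (D t) t := (hderiv t ht).add_const _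
    exact h1.rpow_const (Or.inl hY.ne')
  refine ⟨_, hd, ?_⟩
  set c : ℝ := Y ^ (1/p - 1) with hcdef
  have hc : 0 ≤ c := Real.rpow_nonneg hY.le _
  have h1 : X t ^ (p-1) * c ≤ 1 := by
    have e1 : (X t ^ p) ^ ((p-1)/p) = X t ^ (p-1) := by
      rw [← Real.rpow_mul hXt]
      congr 1
      field_simp
    have hle : X t ^ (p-1) ≤ Y ^ ((p-1)/p) := by
      rw [← e1]
      exact Real.rpow_le_rpow hXp (le_add_of_nonneg_right hδp.le) (div_nonneg (by linarith) hp0.le)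
    have e2 : Y ^ ((p-1)/p) * c = 1 := by
      rw [hcdef, ← Real.rpow_add hY]
      have h0 : (p-1)/p + (1/p - 1) = 0 := by field_simp; ring
      rw [h0, Real.rpow_zero]
    calc X t ^ (p-1) * c ≤ Y ^ ((p-1)/p) * c := mul_le_mul_of_nonneg_right hle hc
      _ = 1 := e2
  have h2 : δ ^ p * c ≤ δ := by
    have hexp : 1/p - 1 ≤ 0 := by
      rw [sub_nonpos]
      exact (div_le_one hp0).mpr hp
    have hle2 : c ≤ (δ ^ p) ^ (1/p - 1) :=
      Real.rpow_le_rpow_of_nonpos hδp (le_add_of_nonneg_left hXp) hexp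
    have e3 : δ ^ p * (δ ^ p) ^ (1/p - 1) = δ := by
      rw [← Real.rpow_mul hδ.le, ← Real.rpow_add hδ]
      have : p + p * (1/p - 1) = 1 := by field_simp; ring
      rw [this, Real.rpow_one]
    calc δ ^ p * c ≤ δ ^ p * (δ ^ p) ^ (1/p - 1) :=
        mul_le_mul_of_nonneg_left hle2 hδp.le
      _ = δ := e3
  have eY : Y ^ (1/p) = Y * c := by
    have h : (1:ℝ)/p = 1 + (1/p - 1) := by ring
    rw [h, Real.rpow_add hY, Real.rpow_one]
  have key : ((1/p) * D t + B * X t ^ p) * c ≤ A t := by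
    calc ((1/p) * D t + B * X t ^ p) * c ≤ (A t * X t ^ (p-1)) * c :=
        mul_le_mul_of_nonneg_right (hineq t ht) hc
      _ = A t * (X t ^ (p-1) * c) := by ring
      _ ≤ A t * 1 := mul_le_mul_of_nonneg_left h1 (hAnonneg t)
      _ = A t := mul_one _
  have key2 : B * (δ ^ p * c) ≤ B * δ := mul_le_mul_of_nonneg_left h2 hB
  have eq : D t * (1/p) * c + B * Y ^ (1/p)
      = ((1/p) * D t + B * X t ^ p) * c + B * (δ ^ p * c) := by
    rw [eY, hYdef]; ring
  rw [eq]
  linarith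
end

section
/- There exists an absolute constant C > 0 such that for every ε ∈ (0,1] and every nonnegative sequence (c_j)_{j∈ℤ} with Σ_j c_j < ∞ and sup_j c_j > 0, one has Σ_{j∈ℤ} c_j ≤ (C/ε) · (sup_{j∈ℤ} c_j) · log( e + ( sup_{j∈ℤ} 2^{−εj} c_j + sup_{j∈ℤ} 2^{εj} c_j ) / ( sup_{j∈ℤ} c_j ) ). -/
open Set

/-- Key ℕ-sum bound: if `f n ≤ M` and `f n ≤ K * r ^ n` with `K * r ^ N ≤ M`, then
`∑' f ≤ (N+1) * M + M / (1 - r)`. -/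
lemma tsum_nat_bound (f : ℕ → ℝ) (hf : ∀ n, 0 ≤ f n) (hsum : Summable f)
    (M K r : ℝ) (hM : 0 ≤ M) (hK : 0 ≤ K) (hr0 : 0 < r) (hr1 : r < 1) (N : ℕ)
    (hfM : ∀ n, f n ≤ M) (hfK : ∀ n, f n ≤ K * r ^ n) (hKr : K * r ^ N ≤ M) :
    ∑' n, f n ≤ (N + 1) * M + M / (1 - r) := by
  have h1r : 0 < 1 - r := by linarith
  have hsplit := Summable.sum_add_tsum_nat_add (N + 1) hsum
  rw [← hsplit]
  have hhead : ∑ i ∈ Finset.range (N + 1), f i ≤ (N + 1) * M := by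
    calc ∑ i ∈ Finset.range (N + 1), f i ≤ ∑ _i ∈ Finset.range (N + 1), M :=
          Finset.sum_le_sum fun i _ => hfM i
      _ = (N + 1) * M := by simp [mul_comm]
  have htail : ∑' m, f (m + (N + 1)) ≤ M / (1 - r) := by
    have hgsum : Summable (fun m : ℕ => M * r ^ m) :=
      (summable_geometric_of_lt_one hr0.le hr1).mul_left M
    have hle : ∀ m, f (m + (N + 1)) ≤ M * r ^ m := by
      intro m
      calc f (m + (N + 1)) ≤ K * r ^ (m + (N + 1)) := hfK _
        _ = (K * r ^ N) * r ^ m * r := by ring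
        _ ≤ M * r ^ m * r := by
            have h1 : (0:ℝ) ≤ r ^ m * r := by positivity
            nlinarith [mul_le_mul_of_nonneg_right hKr h1]
        _ ≤ M * r ^ m * 1 := by
            have : (0:ℝ) ≤ M * r ^ m := by positivity
            nlinarith
        _ = M * r ^ m := by ring
    calc ∑' m, f (m + (N + 1)) ≤ ∑' m, M * r ^ m :=
          Summable.tsum_le_tsum hle (hsum.comp_injective fun a b h => by omega) hgsum
      _ = M * (1 - r)⁻¹ := by rw [tsum_mul_left, tsum_geometric_of_lt_one hr0.le hr1]
      _ = M / (1 - r) := by rw [div_eq_mul_inv]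
  linarith

set_option maxHeartbeats 1000000 in
/-- Logarithmic interpolation inequality (sequence version of Lemma 4.2): there is an
absolute constant `C > 0` such that for all `ε ∈ (0,1]` and every nonnegative summable
sequence `(c_j)` with positive supremum `M` and weighted suprema `A, B`,
`Σ_j c_j ≤ (C/ε) M log(e + (A + B)/M)`. -/
theorem log_interpolation_sequence :
    ∃ C : ℝ, 0 < C ∧ ∀ ε : ℝ, ε ∈ Ioc (0:ℝ) 1 → ∀ c : ℤ → ℝ,
      (∀ j, 0 ≤ c j) → Summable c →
      ∀ M A B : ℝ, IsLUB (Set.range c) M → 0 < M →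
        IsLUB (Set.range fun j : ℤ => (2:ℝ) ^ (-(ε * (j:ℝ))) * c j) A →
        IsLUB (Set.range fun j : ℤ => (2:ℝ) ^ (ε * (j:ℝ)) * c j) B →
        (∑' j : ℤ, c j) ≤ (C / ε) * M * Real.log (Real.exp 1 + (A + B) / M) := by
  refine ⟨12, by norm_num, ?_⟩
  rintro ε ⟨hε0, hε1⟩ c hc hsum M A B hM hM0 hA hB
  -- basic facts
  have hcM : ∀ j, c j ≤ M := fun j => hM.1 ⟨j, rfl⟩
  have hcA : ∀ j : ℤ, (2:ℝ) ^ (-(ε * (j:ℝ))) * c j ≤ A := fun j => hA.1 ⟨j, rfl⟩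
  have hcB : ∀ j : ℤ, (2:ℝ) ^ (ε * (j:ℝ)) * c j ≤ B := fun j => hB.1 ⟨j, rfl⟩
  have hA0 : 0 ≤ A :=
    le_trans (mul_nonneg (Real.rpow_pos_of_pos two_pos _).le (hc 0)) (hcA 0)
  have hB0 : 0 ≤ B :=
    le_trans (mul_nonneg (Real.rpow_pos_of_pos two_pos _).le (hc 0)) (hcB 0)
  -- M ≤ A + B
  have hMAB : M ≤ A + B := by
    refine hM.2 ?_
    rintro _ ⟨j, rfl⟩
    rcases le_or_gt 0 (j : ℝ) with hj | hj
    · have h1 : (1:ℝ) ≤ (2:ℝ) ^ (ε * (j:ℝ)) :=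
        Real.one_le_rpow one_le_two (by positivity)
      have := le_mul_of_one_le_left (hc j) h1
      linarith [hcB j]
    · have h1 : (1:ℝ) ≤ (2:ℝ) ^ (-(ε * (j:ℝ))) :=
        Real.one_le_rpow one_le_two (by nlinarith)
      have := le_mul_of_one_le_left (hc j) h1
      linarith [hcA j]
  set R : ℝ := (A + B) / M with hR
  have hR1 : 1 ≤ R := (one_le_div hM0).mpr hMAB
  set L : ℝ := Real.log (Real.exp 1 + R) with hL
  have hL1 : 1 ≤ L := by
    rw [hL]
    calc (1:ℝ) = Real.log (Real.exp 1) := (Real.log_exp 1).symm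
      _ ≤ Real.log (Real.exp 1 + R) := Real.log_le_log (Real.exp_pos 1) (by linarith)
  -- the geometric ratio
  set r : ℝ := (2:ℝ) ^ (-ε) with hr
  have hr0 : 0 < r := Real.rpow_pos_of_pos two_pos _
  have hr1 : r < 1 := by
    rw [hr]
    exact Real.rpow_lt_one_of_one_lt_of_neg one_lt_two (by linarith)
  -- 1 - r ≥ ε/2 by convexity of exp
  have hconv : r ≤ 1 - ε / 2 := by
    have h := convexOn_exp.2 (mem_univ (-Real.log 2)) (mem_univ 0)
      (le_of_lt hε0) (by linarith : (0:ℝ) ≤ 1 - ε) (by ring)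
    simp only [smul_eq_mul, mul_zero, add_zero, Real.exp_zero, mul_one] at h
    have h2 : Real.exp (-Real.log 2) = 1 / 2 := by
      rw [Real.exp_neg, Real.exp_log two_pos]; norm_num
    have hre : r = Real.exp (ε * -Real.log 2) := by
      rw [hr, Real.rpow_def_of_pos two_pos]; ring_nf
    rw [hre]
    calc Real.exp (ε * -Real.log 2) ≤ ε * Real.exp (-Real.log 2) + (1 - ε) := h
      _ = 1 - ε / 2 := by rw [h2]; ring
  have h1r : 0 < 1 - r := by linarith
  have hT : M / (1 - r) * ε ≤ 2 * M := by
    rw [div_mul_eq_mul_div, div_le_iff₀ h1r]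
    nlinarith
  -- choose N
  set N : ℕ := ⌈Real.log R / (ε * Real.log 2)⌉₊ with hN
  have hlog2 : 0 < Real.log 2 := Real.log_pos one_lt_two
  have hlogR : 0 ≤ Real.log R := Real.log_nonneg hR1
  have hNge : Real.log R / (ε * Real.log 2) ≤ (N : ℝ) := Nat.le_ceil _
  -- r ^ N * (A + B) ≤ M
  have hpow : ∀ n : ℕ, r ^ n = (2:ℝ) ^ (-(ε * (n:ℝ))) := by
    intro n
    rw [hr, ← Real.rpow_natCast ((2:ℝ) ^ (-ε)) n, ← Real.rpow_mul (by norm_num)]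
    ring_nf
  have hkey : (A + B) * r ^ N ≤ M := by
    have hAB0 : 0 < A + B := by linarith
    have hrN : r ^ N = ((2:ℝ) ^ (ε * (N:ℝ)))⁻¹ := by
      rw [hpow N, ← Real.rpow_neg (by norm_num)]
    have hexp : Real.log R ≤ ε * (N:ℝ) * Real.log 2 := by
      rw [div_le_iff₀ (by positivity)] at hNge
      linarith [hNge]
    have hRle : R ≤ (2:ℝ) ^ (ε * (N:ℝ)) :=
      (Real.le_rpow_iff_log_le (by linarith) two_pos).mpr (by linarith)
    have hABR : A + B = R * M := by rw [hR]; field_simp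
    rw [hABR, hrN]
    have h2 : R * ((2:ℝ) ^ (ε * (N:ℝ)))⁻¹ ≤ 1 := by
      rw [← div_eq_mul_inv, div_le_one (Real.rpow_pos_of_pos two_pos _)]
      exact hRle
    nlinarith [mul_le_mul_of_nonneg_right h2 hM0.le,
      (Real.rpow_pos_of_pos two_pos (ε * (N:ℝ))).le]
  -- bound on N (multiplied through by ε)
  have hNle : ((N:ℝ) + 1) * ε ≤ 4 * L := by
    have h1 : (N : ℝ) < Real.log R / (ε * Real.log 2) + 1 :=
      Nat.ceil_lt_add_one (by positivity)
    have h2 : Real.log R ≤ L := by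
      rw [hL]
      exact Real.log_le_log (by linarith) (by nlinarith [Real.exp_pos 1])
    have h3 : (1:ℝ) / 2 ≤ Real.log 2 := by
      have := Real.log_two_gt_d9; linarith
    have h4 : Real.log R / (ε * Real.log 2) * ε ≤ 2 * L := by
      rw [div_mul_eq_mul_div, div_le_iff₀ (by positivity)]
      nlinarith [mul_le_mul_of_nonneg_right h2 hε0.le,
        mul_nonneg (mul_nonneg (by linarith : (0:ℝ) ≤ L) hε0.le)
          (by linarith : (0:ℝ) ≤ 2 * Real.log 2 - 1)]
    have h5 : ε ≤ L := le_trans hε1 hL1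
    nlinarith [mul_le_mul_of_nonneg_right h1.le hε0.le]
  -- the two ℕ-indexed sums
  have hsum₁ : Summable (fun n : ℕ => c n) :=
    hsum.comp_injective fun a b h => by exact_mod_cast h
  have hsum₂ : Summable (fun n : ℕ => c (-(n + 1))) :=
    hsum.comp_injective fun a b h => by omega
  have hbd₁ : ∑' n : ℕ, c n ≤ ((N:ℝ) + 1) * M + M / (1 - r) := by
    refine tsum_nat_bound _ (fun n => hc n) hsum₁ M (A + B) r hM0.le (by linarith)
      hr0 hr1 N (fun n => hcM n) (fun n => ?_) hkey
    have hb := hcB (n : ℤ)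
    push_cast at hb
    have hp : (0:ℝ) < (2:ℝ) ^ (ε * (n:ℝ)) := Real.rpow_pos_of_pos two_pos _
    rw [mul_comm, ← le_div_iff₀ hp] at hb
    calc c (n:ℤ) ≤ B / (2:ℝ) ^ (ε * (n:ℝ)) := hb
      _ = B * (2:ℝ) ^ (-(ε * (n:ℝ))) := by
          rw [Real.rpow_neg (by norm_num), div_eq_mul_inv]
      _ = B * r ^ n := by rw [hpow n]
      _ ≤ (A + B) * r ^ n := by
          apply mul_le_mul_of_nonneg_right (by linarith) (by positivity)
  have hbd₂ : ∑' n : ℕ, c (-(n + 1)) ≤ ((N:ℝ) + 1) * M + M / (1 - r) := by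
    refine tsum_nat_bound _ (fun n => hc _) hsum₂ M (A + B) r hM0.le (by linarith)
      hr0 hr1 N (fun n => hcM _) (fun n => ?_) hkey
    have ha := hcA (-(n + 1))
    push_cast at ha
    rw [show -(ε * -((n:ℝ) + 1)) = ε * ((n:ℝ) + 1) by ring] at ha
    have hp : (0:ℝ) < (2:ℝ) ^ (ε * ((n:ℝ) + 1)) := Real.rpow_pos_of_pos two_pos _
    rw [mul_comm, ← le_div_iff₀ hp] at ha
    calc c (-(n + 1)) ≤ A / (2:ℝ) ^ (ε * ((n:ℝ) + 1)) := ha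
      _ = A * (2:ℝ) ^ (-(ε * ((n:ℝ) + 1))) := by
          rw [Real.rpow_neg (by norm_num), div_eq_mul_inv]
      _ ≤ A * (2:ℝ) ^ (-(ε * (n:ℝ))) :=
          mul_le_mul_of_nonneg_left
            (Real.rpow_le_rpow_of_exponent_le one_le_two (by nlinarith)) hA0
      _ = A * r ^ n := by rw [hpow n]
      _ ≤ (A + B) * r ^ n := by
          apply mul_le_mul_of_nonneg_right (by linarith) (by positivity)
  -- assemble
  have hsplit : ∑' j : ℤ, c j = (∑' n : ℕ, c n) + ∑' n : ℕ, c (-(n + 1)) :=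
    tsum_of_nat_of_neg_add_one hsum₁ hsum₂
  rw [hsplit]
  rw [div_mul_eq_mul_div, div_mul_eq_mul_div, le_div_iff₀ hε0]
  -- goal : (S₁ + S₂) * ε ≤ 12 * M * L
  have hb : (∑' n : ℕ, c n) + ∑' n : ℕ, c (-(n + 1))
      ≤ 2 * (((N:ℝ) + 1) * M + M / (1 - r)) := by linarith
  have hb' := mul_le_mul_of_nonneg_right hb hε0.le
  have key := mul_le_mul_of_nonneg_right hNle hM0.le
  have hLM : M ≤ L * M := le_mul_of_one_le_left hM0.le hL1
  nlinarith [hb', key, hT]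
end

section
/- For 0 ≤ σ₁ and σ₂ > 1 with σ₁ ≤ σ₂, there is a constant C such that ∫₀ᵗ ⟨t−τ⟩^{−σ₁} τ^{−1/2} ⟨τ⟩^{1/2 − σ₂} dτ ≤ C ⟨t⟩^{−σ₁} for all t > 0. -/
open MeasureTheory Real Set intervalIntegral

-- integral of (1+s)^(-q)
lemma cdh_int_one_add (q A : ℝ) (hA : 0 ≤ A) (hq : q ≠ 1) :
    ∫ s in (0:ℝ)..A, (1+s) ^ (-q) = ((1+A) ^ (1-q) - 1) / (1-q) := by
  have h := intervalIntegral.integral_comp_add_left (fun s : ℝ => s ^ (-q)) 1 (a := 0) (b := A)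
  simp only [add_zero] at h
  rw [h, integral_rpow]
  · rw [Real.one_rpow]; ring_nf
  · right
    constructor
    · intro hc; apply hq; nlinarith [hc]
    · rw [Set.mem_uIcc]; push_neg; constructor <;> intro h' <;> linarith

-- the kernel integrand near the origin
lemma cdh_integrable_kernel (σ₂ A : ℝ) (h2 : 1 < σ₂) (hA : 0 ≤ A) :
    IntervalIntegrable (fun τ : ℝ => τ ^ (-(1/2:ℝ)) * (1 + τ^2) ^ ((1/2 - σ₂)/2))
      volume 0 A := by
  apply IntervalIntegrable.mono_fun (intervalIntegrable_rpow' (by norm_num) (r := -(1/2:ℝ)))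
  · apply ContinuousOn.aestronglyMeasurable _ measurableSet_uIoc
    apply ContinuousOn.mul
    · apply ContinuousOn.rpow_const continuousOn_id
      intro x hx
      rw [Set.uIoc_of_le hA] at hx
      exact Or.inl (ne_of_gt hx.1)
    · apply ContinuousOn.rpow_const (by fun_prop)
      intro x _; left; nlinarith [sq_nonneg x]
  · filter_upwards [ae_restrict_mem measurableSet_uIoc] with τ hτ
    rw [Set.uIoc_of_le hA] at hτ
    have h1 : (0:ℝ) < τ ^ (-(1/2:ℝ)) := Real.rpow_pos_of_pos hτ.1 _
    have h2' : (1 + τ^2) ^ ((1/2 - σ₂)/2) ≤ 1 := by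
      apply Real.rpow_le_one_of_one_le_of_nonpos (by nlinarith [sq_nonneg τ]) (by linarith)
    have h3 : (0:ℝ) ≤ (1 + τ^2) ^ ((1/2 - σ₂)/2) :=
      Real.rpow_nonneg (by nlinarith [sq_nonneg τ]) _
    rw [Real.norm_eq_abs, Real.norm_eq_abs, abs_of_nonneg (by positivity),
      abs_of_nonneg h1.le]
    nlinarith

lemma cdh_sqrt_int (A : ℝ) (hA : 0 ≤ A) :
    ∫ τ in (0:ℝ)..A, τ ^ (-(1/2:ℝ)) = 2 * A ^ ((1:ℝ)/2) := by
  rw [integral_rpow (Or.inl (by norm_num))]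
  norm_num
  ring

lemma cdh_kernel_bound (σ₂ A : ℝ) (h2 : 1 < σ₂) (hA : 0 ≤ A) :
    ∫ τ in (0:ℝ)..A, τ ^ (-(1/2:ℝ)) * (1 + τ^2) ^ ((1/2 - σ₂)/2) ≤ 2 + 1/(σ₂-1) := by
  have hs : (0:ℝ) < σ₂ - 1 := by linarith
  have hpos : (0:ℝ) < 1/(σ₂-1) := by positivity
  have hbase : ∀ τ : ℝ, (0:ℝ) < 1 + τ^2 := fun τ => by nlinarith [sq_nonneg τ]
  have hmono : ∀ B : ℝ, 0 ≤ B → B ≤ 1 →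
      ∫ τ in (0:ℝ)..B, τ ^ (-(1/2:ℝ)) * (1 + τ^2) ^ ((1/2 - σ₂)/2) ≤ 2 := by
    intro B hB0 hB1
    calc ∫ τ in (0:ℝ)..B, τ ^ (-(1/2:ℝ)) * (1 + τ^2) ^ ((1/2 - σ₂)/2)
        ≤ ∫ τ in (0:ℝ)..B, τ ^ (-(1/2:ℝ)) := by
          apply intervalIntegral.integral_mono_on hB0
            (cdh_integrable_kernel σ₂ B h2 hB0)
            (intervalIntegrable_rpow' (by norm_num))
          intro τ hτ
          have h3 : (1 + τ^2) ^ ((1/2 - σ₂)/2) ≤ 1 :=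
            Real.rpow_le_one_of_one_le_of_nonpos (by nlinarith [sq_nonneg τ]) (by linarith)
          have h4 : (0:ℝ) ≤ τ ^ (-(1/2:ℝ)) := Real.rpow_nonneg hτ.1 _
          nlinarith [Real.rpow_nonneg (hbase τ).le ((1/2 - σ₂)/2)]
      _ = 2 * B ^ ((1:ℝ)/2) := cdh_sqrt_int B hB0
      _ ≤ 2 := by
          nlinarith [Real.rpow_le_one hB0 hB1 (by norm_num : (0:ℝ) ≤ 1/2)]
  rcases le_or_gt A 1 with hA1 | hA1
  · linarith [hmono A hA hA1]
  · have hsplit : ∫ τ in (0:ℝ)..A, τ ^ (-(1/2:ℝ)) * (1 + τ^2) ^ ((1/2 - σ₂)/2)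
        = (∫ τ in (0:ℝ)..1, τ ^ (-(1/2:ℝ)) * (1 + τ^2) ^ ((1/2 - σ₂)/2))
          + ∫ τ in (1:ℝ)..A, τ ^ (-(1/2:ℝ)) * (1 + τ^2) ^ ((1/2 - σ₂)/2) := by
      rw [intervalIntegral.integral_add_adjacent_intervals]
      · exact (cdh_integrable_kernel σ₂ A h2 hA).mono_set
          (by rw [Set.uIcc_of_le (by norm_num), Set.uIcc_of_le hA]
              exact Set.Icc_subset_Icc (le_refl _) hA1.le)
      · exact (cdh_integrable_kernel σ₂ A h2 hA).mono_set
          (by rw [Set.uIcc_of_le hA1.le, Set.uIcc_of_le hA]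
              exact Set.Icc_subset_Icc (by norm_num) (le_refl _))
    rw [hsplit]
    have h1 : (∫ τ in (0:ℝ)..1, τ ^ (-(1/2:ℝ)) * (1 + τ^2) ^ ((1/2 - σ₂)/2)) ≤ 2 :=
      hmono 1 (by norm_num) (le_refl _)
    have h2' : (∫ τ in (1:ℝ)..A, τ ^ (-(1/2:ℝ)) * (1 + τ^2) ^ ((1/2 - σ₂)/2)) ≤ 1/(σ₂-1) := by
      have hzero : (0:ℝ) ∉ Set.uIcc (1:ℝ) A := by
        rw [Set.uIcc_of_le hA1.le]; intro h; exact absurd h.1 (by norm_num)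
      calc (∫ τ in (1:ℝ)..A, τ ^ (-(1/2:ℝ)) * (1 + τ^2) ^ ((1/2 - σ₂)/2))
          ≤ ∫ τ in (1:ℝ)..A, τ ^ (-σ₂) := by
            apply intervalIntegral.integral_mono_on hA1.le
              ((cdh_integrable_kernel σ₂ A h2 hA).mono_set
                (by rw [Set.uIcc_of_le hA1.le, Set.uIcc_of_le hA]
                    exact Set.Icc_subset_Icc (by norm_num) (le_refl _)))
              (intervalIntegrable_rpow (Or.inr hzero))
            intro τ hτ
            have hτ1 : (1:ℝ) ≤ τ := hτ.1
            have hτ0 : (0:ℝ) < τ := by linarith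
            have key : (1 + τ^2) ^ ((1/2 - σ₂)/2) ≤ τ ^ ((1/2 - σ₂)) := by
              have e1 : (τ^2 : ℝ) ^ ((1/2 - σ₂)/2) = τ ^ ((1/2 - σ₂)) := by
                rw [← Real.rpow_natCast τ 2, ← Real.rpow_mul hτ0.le]
                congr 1; ring
              rw [← e1]
              exact Real.rpow_le_rpow_of_nonpos (by positivity) (by nlinarith) (by linarith)
            calc τ ^ (-(1/2:ℝ)) * (1 + τ^2) ^ ((1/2 - σ₂)/2)
                ≤ τ ^ (-(1/2:ℝ)) * τ ^ ((1/2 - σ₂)) := by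
                  exact mul_le_mul_of_nonneg_left key (Real.rpow_nonneg hτ0.le _)
              _ = τ ^ (-σ₂) := by
                  rw [← Real.rpow_add hτ0]; ring_nf
        _ ≤ 1/(σ₂-1) := by
            rw [integral_rpow (Or.inr ⟨by intro h; nlinarith [h], hzero⟩)]
            have hApow : (0:ℝ) ≤ A ^ (-σ₂ + 1) := Real.rpow_nonneg (by linarith) _
            rw [Real.one_rpow]
            have heq : (A ^ (-σ₂ + 1) - 1) / (-σ₂ + 1) = (1 - A ^ (-σ₂ + 1)) / (σ₂ - 1) := by
              rw [div_eq_div_iff (by linarith) (by linarith)]; ring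
            rw [heq]
            gcongr
            linarith
    linarith

lemma cdh_integrable_full (σ₁ σ₂ t a b : ℝ) (h0 : 0 ≤ σ₁) (h2 : 1 < σ₂) (ht : 0 < t)
    (ha : 0 ≤ a) (hab : a ≤ b) (hbt : b ≤ t) :
    IntervalIntegrable (fun τ : ℝ =>
      (1 + (t - τ)^2) ^ (-(σ₁/2)) * τ ^ (-(1/2:ℝ)) * (1 + τ^2) ^ ((1/2 - σ₂)/2))
      volume a b := by
  have hker : IntervalIntegrable (fun τ : ℝ => τ ^ (-(1/2:ℝ)) * (1 + τ^2) ^ ((1/2 - σ₂)/2))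
      volume a b := by
    apply (cdh_integrable_kernel σ₂ t h2 ht.le).mono_set
    rw [Set.uIcc_of_le hab, Set.uIcc_of_le ht.le]
    exact Set.Icc_subset_Icc ha hbt
  apply IntervalIntegrable.mono_fun hker
  · apply ContinuousOn.aestronglyMeasurable _ measurableSet_uIoc
    apply ContinuousOn.mul
    apply ContinuousOn.mul
    · apply ContinuousOn.rpow_const (by fun_prop)
      intro x _; left; nlinarith [sq_nonneg (t - x)]
    · apply ContinuousOn.rpow_const continuousOn_id
      intro x hx
      rw [Set.uIoc_of_le hab] at hx
      left; exact ne_of_gt (lt_of_le_of_lt ha hx.1)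
    · apply ContinuousOn.rpow_const (by fun_prop)
      intro x _; left; nlinarith [sq_nonneg x]
  · filter_upwards [ae_restrict_mem measurableSet_uIoc] with τ hτ
    rw [Set.uIoc_of_le hab] at hτ
    have hτ0 : 0 < τ := lt_of_le_of_lt ha hτ.1
    have ha1 : (1 + (t - τ)^2) ^ (-(σ₁/2)) ≤ 1 :=
      Real.rpow_le_one_of_one_le_of_nonpos (by nlinarith [sq_nonneg (t - τ)]) (by linarith)
    have ha0 : (0:ℝ) ≤ (1 + (t - τ)^2) ^ (-(σ₁/2)) :=
      Real.rpow_nonneg (by nlinarith [sq_nonneg (t - τ)]) _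
    have hg0 : (0:ℝ) ≤ τ ^ (-(1/2:ℝ)) * (1 + τ^2) ^ ((1/2 - σ₂)/2) := by
      apply mul_nonneg (Real.rpow_nonneg hτ0.le _)
        (Real.rpow_nonneg (by nlinarith [sq_nonneg τ]) _)
    rw [Real.norm_eq_abs, Real.norm_eq_abs, abs_of_nonneg (by rw [mul_assoc]; positivity),
      abs_of_nonneg hg0]
    rw [mul_assoc]
    nlinarith

lemma cdh_one_add_sq_int (σ₁ q B : ℝ) (h0 : 0 ≤ q) (hq1 : q ≤ σ₁) (hqne : q ≠ 1) (hB : 0 ≤ B) :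
    ∫ s in (0:ℝ)..B, (1+s^2) ^ (-(σ₁/2)) ≤ 2 ^ (q/2) * (((1+B) ^ (1-q) - 1)/(1-q)) := by
  have key : ∀ s : ℝ, 0 ≤ s → (1+s^2) ^ (-(σ₁/2)) ≤ 2 ^ (q/2) * (1+s) ^ (-q) := by
    intro s hs
    have hb1 : (1:ℝ) ≤ 1 + s^2 := by nlinarith [sq_nonneg s]
    have h1 : (1+s^2) ^ (-(σ₁/2)) ≤ (1+s^2) ^ (-(q/2)) :=
      Real.rpow_le_rpow_of_exponent_le hb1 (by linarith)
    have h2 : (1+s^2) ^ (-(q/2)) ≤ ((1+s)^2 / 2) ^ (-(q/2)) := by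
      apply Real.rpow_le_rpow_of_nonpos (by positivity) (by nlinarith [sq_nonneg (1-s)]) (by linarith)
    have e1 : ((1+s)^2 : ℝ) ^ (-(q/2)) = (1+s) ^ (-q) := by
      rw [← Real.rpow_natCast (1+s) 2, ← Real.rpow_mul (by linarith)]
      congr 1; push_cast; ring
    have h3 : ((1+s)^2 / 2 : ℝ) ^ (-(q/2)) = 2 ^ (q/2) * (1+s) ^ (-q) := by
      rw [Real.div_rpow (by positivity) (by norm_num), e1,
        Real.rpow_neg (by norm_num : (0:ℝ) ≤ 2)]
      field_simp
    calc (1+s^2) ^ (-(σ₁/2)) ≤ ((1+s)^2 / 2) ^ (-(q/2)) := le_trans h1 h2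
      _ = 2 ^ (q/2) * (1+s) ^ (-q) := h3
  have hint1 : IntervalIntegrable (fun s : ℝ => (1+s^2) ^ (-(σ₁/2))) volume 0 B := by
    apply Continuous.intervalIntegrable
    apply Continuous.rpow_const (by fun_prop)
    intro x; left; nlinarith [sq_nonneg x]
  have hint2 : IntervalIntegrable (fun s : ℝ => 2 ^ (q/2) * (1+s) ^ (-q)) volume 0 B := by
    apply ContinuousOn.intervalIntegrable
    apply ContinuousOn.mul continuousOn_const
    apply ContinuousOn.rpow_const (by fun_prop)
    intro x hx
    rw [Set.uIcc_of_le hB] at hx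
    left; linarith [hx.1]
  calc ∫ s in (0:ℝ)..B, (1+s^2) ^ (-(σ₁/2))
      ≤ ∫ s in (0:ℝ)..B, 2 ^ (q/2) * (1+s) ^ (-q) := by
        apply intervalIntegral.integral_mono_on hB hint1 hint2
        intro s hs; exact key s hs.1
    _ = 2 ^ (q/2) * (((1+B) ^ (1-q) - 1)/(1-q)) := by
        rw [intervalIntegral.integral_const_mul, cdh_int_one_add q B hB hqne]

-- bound on ∫₀^{t/2} (1+s²)^{-σ₁/2} ds for t ≥ 1
lemma cdh_tail (σ₁ σ₂ : ℝ) (h0 : 0 ≤ σ₁) (h12 : σ₁ ≤ σ₂) (h2 : 1 < σ₂) :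
    ∃ c : ℝ, 0 < c ∧ ∀ t : ℝ, 1 ≤ t →
      ∫ s in (0:ℝ)..t/2, (1+s^2) ^ (-(σ₁/2)) ≤ c * (1+t^2) ^ ((σ₂-σ₁)/2) := by
  have hXfact : ∀ t : ℝ, 1 ≤ t → (1:ℝ) ≤ (1+t^2) ^ ((σ₂-σ₁)/2) := by
    intro t ht
    calc (1:ℝ) = (1+t^2) ^ (0:ℝ) := (Real.rpow_zero _).symm
      _ ≤ (1+t^2) ^ ((σ₂-σ₁)/2) :=
          Real.rpow_le_rpow_of_exponent_le (by nlinarith) (by linarith)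
  rcases le_or_gt σ₁ 1 with hs1 | hs1
  · -- q = max 0 (σ₁ - σ₂ + 1) < 1
    set q : ℝ := max 0 (σ₁ - σ₂ + 1) with hq
    have hq0 : 0 ≤ q := le_max_left _ _
    have hq1 : q < 1 := max_lt (by norm_num) (by linarith)
    have hd : (0:ℝ) < 1 - q := by linarith
    have hqσ : q ≤ σ₁ := max_le h0 (by linarith)
    have hc₀ : (0:ℝ) < 2 ^ (q/2) * (2 ^ ((1:ℝ)/2) / (1-q)) := by positivity
    refine ⟨2 ^ (q/2) * (2 ^ ((1:ℝ)/2) / (1-q)), hc₀, fun t ht => ?_⟩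
    have ht0 : (0:ℝ) ≤ t/2 := by linarith
    have key : (1+t/2) ^ (1-q) ≤ 2 ^ ((1:ℝ)/2) * (1+t^2) ^ ((1-q)/2) := by
      have hb : (1+t/2 : ℝ) ≤ (2*(1+t^2)) ^ ((1:ℝ)/2) := by
        have h1 : ((1+t/2)^2 : ℝ) ^ ((1:ℝ)/2) ≤ (2*(1+t^2)) ^ ((1:ℝ)/2) :=
          Real.rpow_le_rpow (by positivity)
            (by nlinarith [sq_nonneg (1 - t/2), sq_nonneg t]) (by norm_num)
        rwa [← Real.rpow_natCast (1+t/2) 2, ← Real.rpow_mul (by linarith),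
          show ((2:ℕ):ℝ) * (1/2) = 1 by norm_num, Real.rpow_one] at h1
      calc (1+t/2) ^ (1-q) ≤ ((2*(1+t^2)) ^ ((1:ℝ)/2)) ^ (1-q) :=
            Real.rpow_le_rpow (by linarith) hb (by linarith)
        _ = 2 ^ ((1-q)/2) * (1+t^2) ^ ((1-q)/2) := by
            rw [← Real.rpow_mul (by positivity),
              Real.mul_rpow (by norm_num) (by positivity),
              show (1:ℝ)/2*(1-q) = (1-q)/2 by ring]
        _ ≤ 2 ^ ((1:ℝ)/2) * (1+t^2) ^ ((1-q)/2) :=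
            mul_le_mul_of_nonneg_right
              (Real.rpow_le_rpow_of_exponent_le (by norm_num) (by linarith))
              (Real.rpow_nonneg (by positivity) _)
    calc ∫ s in (0:ℝ)..t/2, (1+s^2) ^ (-(σ₁/2))
        ≤ 2 ^ (q/2) * (((1+t/2) ^ (1-q) - 1)/(1-q)) :=
          cdh_one_add_sq_int σ₁ q (t/2) hq0 hqσ (ne_of_lt hq1) ht0
      _ ≤ 2 ^ (q/2) * ((2 ^ ((1:ℝ)/2) * (1+t^2) ^ ((1-q)/2))/(1-q)) := by
          apply mul_le_mul_of_nonneg_left _ (Real.rpow_nonneg (by norm_num) _)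
          gcongr
          linarith [key]
      _ = (2 ^ (q/2) * (2 ^ ((1:ℝ)/2) / (1-q))) * (1+t^2) ^ ((1-q)/2) := by ring
      _ ≤ (2 ^ (q/2) * (2 ^ ((1:ℝ)/2) / (1-q))) * (1+t^2) ^ ((σ₂-σ₁)/2) := by
          apply mul_le_mul_of_nonneg_left _ hc₀.le
          apply Real.rpow_le_rpow_of_exponent_le (by nlinarith)
          have := le_max_right (0:ℝ) (σ₁ - σ₂ + 1)
          rw [← hq] at this
          linarith
  · -- q = σ₁ > 1
    have hd : (0:ℝ) < σ₁ - 1 := by linarith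
    have hc₀ : (0:ℝ) < 2 ^ (σ₁/2) * (1/(σ₁-1)) := by positivity
    refine ⟨2 ^ (σ₁/2) * (1/(σ₁-1)), hc₀, fun t ht => ?_⟩
    have ht0 : (0:ℝ) ≤ t/2 := by linarith
    calc ∫ s in (0:ℝ)..t/2, (1+s^2) ^ (-(σ₁/2))
        ≤ 2 ^ (σ₁/2) * (((1+t/2) ^ (1-σ₁) - 1)/(1-σ₁)) :=
          cdh_one_add_sq_int σ₁ σ₁ (t/2) h0 (le_refl _) (by linarith) ht0
      _ ≤ 2 ^ (σ₁/2) * (1/(σ₁-1)) := by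
          apply mul_le_mul_of_nonneg_left _ (Real.rpow_nonneg (by norm_num) _)
          have hp : (0:ℝ) ≤ (1+t/2) ^ (1-σ₁) := Real.rpow_nonneg (by linarith) _
          have heq : ((1+t/2) ^ (1-σ₁) - 1)/(1-σ₁) = (1 - (1+t/2) ^ (1-σ₁))/(σ₁-1) := by
            rw [div_eq_div_iff (by linarith) (by linarith)]; ring
          rw [heq]
          gcongr
          linarith
      _ ≤ 2 ^ (σ₁/2) * (1/(σ₁-1)) * (1+t^2) ^ ((σ₂-σ₁)/2) := by
          nth_rewrite 1 [← mul_one (2 ^ (σ₁/2) * (1/(σ₁-1)))]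
          exact mul_le_mul_of_nonneg_left (hXfact t ht) hc₀.le

set_option maxHeartbeats 1000000 in
/-- The instance `θ = 1/2` of the convolution inequality (5.3): for `0 ≤ σ₁ ≤ σ₂` with
`σ₂ > 1`, `∫₀ᵗ ⟨t−τ⟩^{−σ₁} τ^{−1/2} ⟨τ⟩^{1/2−σ₂} dτ ≤ C ⟨t⟩^{−σ₁}` for `t > 0`,
where `⟨s⟩ = (1+s²)^{1/2}`. -/
theorem convolution_decay_half_singularity (σ₁ σ₂ : ℝ) (h0 : 0 ≤ σ₁) (h12 : σ₁ ≤ σ₂)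
    (h2 : 1 < σ₂) :
    ∃ C : ℝ, 0 < C ∧ ∀ t : ℝ, 0 < t →
      (∫ τ in (0:ℝ)..t,
          (1 + (t - τ) ^ 2) ^ (-(σ₁ / 2)) * τ ^ (-(1 / 2 : ℝ)) *
            (1 + τ ^ 2) ^ ((1 / 2 - σ₂) / 2))
        ≤ C * (1 + t ^ 2) ^ (-(σ₁ / 2)) := by
  obtain ⟨c₃, hc₃, htail⟩ := cdh_tail σ₁ σ₂ h0 h12 h2
  have hσ : (0:ℝ) < σ₂ - 1 := by linarith
  set K1 : ℝ := 2 + 1/(σ₂-1) with hK1def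
  have hK1 : 0 < K1 := by positivity
  set Csmall : ℝ := 2 * 2 ^ (σ₁/2) with hCs
  set C1 : ℝ := 4 ^ (σ₁/2) * K1 with hC1
  set C2 : ℝ := 2 ^ ((3:ℝ)/4) * 4 ^ ((σ₂-1/2)/2) * c₃ with hC2
  have hCs0 : 0 < Csmall := by positivity
  have hC10 : 0 < C1 := by positivity
  have hC20 : 0 < C2 := by positivity
  refine ⟨Csmall + C1 + C2, by positivity, fun t ht => ?_⟩
  have hX0 : (0:ℝ) < 1 + t^2 := by nlinarith [sq_nonneg t]
  have hR0 : (0:ℝ) ≤ (1+t^2) ^ (-(σ₁/2)) := Real.rpow_nonneg hX0.le _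
  rcases le_or_gt t 1 with ht1 | ht1
  · -- small time
    have hstep : (∫ τ in (0:ℝ)..t, (1 + (t - τ)^2) ^ (-(σ₁/2)) * τ ^ (-(1/2:ℝ))
        * (1 + τ^2) ^ ((1/2 - σ₂)/2)) ≤ 2 * t ^ ((1:ℝ)/2) := by
      rw [← cdh_sqrt_int t ht.le]
      apply intervalIntegral.integral_mono_on ht.le
        (cdh_integrable_full σ₁ σ₂ t 0 t h0 h2 ht (le_refl _) ht.le (le_refl _))
        (intervalIntegrable_rpow' (by norm_num))
      intro τ hτ
      have ha1 : (1 + (t - τ)^2) ^ (-(σ₁/2)) ≤ 1 :=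
        Real.rpow_le_one_of_one_le_of_nonpos (by nlinarith [sq_nonneg (t-τ)]) (by linarith)
      have hc1 : (1 + τ^2) ^ ((1/2 - σ₂)/2) ≤ 1 :=
        Real.rpow_le_one_of_one_le_of_nonpos (by nlinarith [sq_nonneg τ]) (by linarith)
      have hb0 : (0:ℝ) ≤ τ ^ (-(1/2:ℝ)) := Real.rpow_nonneg hτ.1 _
      have ha0 : (0:ℝ) ≤ (1 + (t - τ)^2) ^ (-(σ₁/2)) :=
        Real.rpow_nonneg (by nlinarith [sq_nonneg (t-τ)]) _
      have hc0 : (0:ℝ) ≤ (1 + τ^2) ^ ((1/2 - σ₂)/2) :=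
        Real.rpow_nonneg (by nlinarith [sq_nonneg τ]) _
      nlinarith [mul_le_mul_of_nonneg_right ha1 hb0]
    have h2le : 2 * t ^ ((1:ℝ)/2) ≤ 2 := by
      nlinarith [Real.rpow_le_one ht.le ht1 (by norm_num : (0:ℝ) ≤ 1/2)]
    have hRlow : (2:ℝ) ^ (-(σ₁/2)) ≤ (1+t^2) ^ (-(σ₁/2)) :=
      Real.rpow_le_rpow_of_nonpos hX0 (by nlinarith [ht.le, ht1]) (by linarith)
    have hone : (2:ℝ) ^ (σ₁/2) * 2 ^ (-(σ₁/2)) = 1 := by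
      rw [← Real.rpow_add (by norm_num)]; simp
    have hfin : (2:ℝ) ≤ Csmall * (1+t^2) ^ (-(σ₁/2)) := by
      have h' := mul_le_mul_of_nonneg_left hRlow
        (by positivity : (0:ℝ) ≤ 2 * 2 ^ (σ₁/2))
      calc (2:ℝ) = 2 * (2 ^ (σ₁/2) * 2 ^ (-(σ₁/2))) := by rw [hone]; ring
        _ ≤ Csmall * (1+t^2) ^ (-(σ₁/2)) := by rw [hCs]; nlinarith [h']
    nlinarith [hstep, h2le, hfin, mul_nonneg hC10.le hR0, mul_nonneg hC20.le hR0]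
  · -- large time t ≥ 1
    have ht0' : (0:ℝ) < t/2 := by linarith
    have hhalf : (0:ℝ) ≤ t/2 := ht0'.le
    have hhalft : t/2 ≤ t := by linarith
    have I1 := cdh_integrable_full σ₁ σ₂ t 0 (t/2) h0 h2 ht (le_refl _) hhalf hhalft
    have I2 := cdh_integrable_full σ₁ σ₂ t (t/2) t h0 h2 ht hhalf hhalft (le_refl _)
    have hsplit : (∫ τ in (0:ℝ)..t, (1 + (t - τ)^2) ^ (-(σ₁/2)) * τ ^ (-(1/2:ℝ))
          * (1 + τ^2) ^ ((1/2 - σ₂)/2))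
        = (∫ τ in (0:ℝ)..t/2, (1 + (t - τ)^2) ^ (-(σ₁/2)) * τ ^ (-(1/2:ℝ))
          * (1 + τ^2) ^ ((1/2 - σ₂)/2))
        + ∫ τ in (t/2)..t, (1 + (t - τ)^2) ^ (-(σ₁/2)) * τ ^ (-(1/2:ℝ))
          * (1 + τ^2) ^ ((1/2 - σ₂)/2) :=
      (intervalIntegral.integral_add_adjacent_intervals I1 I2).symm
    -- piece 1
    have hA0 : (0:ℝ) ≤ (1 + (t/2)^2) ^ (-(σ₁/2)) := Real.rpow_nonneg (by positivity) _
    have hp1 : (∫ τ in (0:ℝ)..t/2, (1 + (t - τ)^2) ^ (-(σ₁/2)) * τ ^ (-(1/2:ℝ))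
          * (1 + τ^2) ^ ((1/2 - σ₂)/2)) ≤ (1 + (t/2)^2) ^ (-(σ₁/2)) * K1 := by
      calc (∫ τ in (0:ℝ)..t/2, (1 + (t - τ)^2) ^ (-(σ₁/2)) * τ ^ (-(1/2:ℝ))
            * (1 + τ^2) ^ ((1/2 - σ₂)/2))
          ≤ ∫ τ in (0:ℝ)..t/2, (1 + (t/2)^2) ^ (-(σ₁/2))
            * (τ ^ (-(1/2:ℝ)) * (1 + τ^2) ^ ((1/2 - σ₂)/2)) := by
            apply intervalIntegral.integral_mono_on hhalf I1
              ((cdh_integrable_kernel σ₂ (t/2) h2 hhalf).const_mul _)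
            intro τ hτ
            have ha' : (1 + (t - τ)^2) ^ (-(σ₁/2)) ≤ (1 + (t/2)^2) ^ (-(σ₁/2)) := by
              apply Real.rpow_le_rpow_of_nonpos (by positivity) ?_ (by linarith)
              nlinarith [hτ.1, hτ.2, mul_nonneg (sub_nonneg.mpr hτ.2)
                (show (0:ℝ) ≤ t - τ + t/2 by nlinarith [hτ.2])]
            have hbc0 : (0:ℝ) ≤ τ ^ (-(1/2:ℝ)) * (1 + τ^2) ^ ((1/2 - σ₂)/2) :=
              mul_nonneg (Real.rpow_nonneg hτ.1 _)
                (Real.rpow_nonneg (by nlinarith [sq_nonneg τ]) _)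
            rw [mul_assoc]
            exact mul_le_mul_of_nonneg_right ha' hbc0
        _ = (1 + (t/2)^2) ^ (-(σ₁/2)) * ∫ τ in (0:ℝ)..t/2,
              τ ^ (-(1/2:ℝ)) * (1 + τ^2) ^ ((1/2 - σ₂)/2) :=
            intervalIntegral.integral_const_mul _ _
        _ ≤ (1 + (t/2)^2) ^ (-(σ₁/2)) * K1 :=
            mul_le_mul_of_nonneg_left (cdh_kernel_bound σ₂ (t/2) h2 hhalf) hA0
    have hA0le : (1 + (t/2)^2) ^ (-(σ₁/2)) ≤ 4 ^ (σ₁/2) * (1+t^2) ^ (-(σ₁/2)) := by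
      have step1 : (1 + (t/2)^2) ^ (-(σ₁/2)) ≤ ((1+t^2)/4) ^ (-(σ₁/2)) :=
        Real.rpow_le_rpow_of_nonpos (by positivity) (by nlinarith) (by linarith)
      have step2 : ((1+t^2)/4 : ℝ) ^ (-(σ₁/2)) = 4 ^ (σ₁/2) * (1+t^2) ^ (-(σ₁/2)) := by
        rw [Real.div_rpow hX0.le (by norm_num),
          Real.rpow_neg (show (0:ℝ) ≤ 4 by norm_num) (σ₁/2), div_eq_mul_inv, inv_inv]
        ring
      linarith [step1, step2.le, step2.ge]
    have hpiece1 : (∫ τ in (0:ℝ)..t/2, (1 + (t - τ)^2) ^ (-(σ₁/2)) * τ ^ (-(1/2:ℝ))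
          * (1 + τ^2) ^ ((1/2 - σ₂)/2)) ≤ C1 * (1+t^2) ^ (-(σ₁/2)) := by
      calc (∫ τ in (0:ℝ)..t/2, (1 + (t - τ)^2) ^ (-(σ₁/2)) * τ ^ (-(1/2:ℝ))
            * (1 + τ^2) ^ ((1/2 - σ₂)/2)) ≤ (1 + (t/2)^2) ^ (-(σ₁/2)) * K1 := hp1
        _ ≤ (4 ^ (σ₁/2) * (1+t^2) ^ (-(σ₁/2))) * K1 :=
            mul_le_mul_of_nonneg_right hA0le hK1.le
        _ = C1 * (1+t^2) ^ (-(σ₁/2)) := by rw [hC1]; ring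
    -- piece 2
    set D : ℝ := (t/2) ^ (-(1/2:ℝ)) * ((1+t^2)/4) ^ ((1/2-σ₂)/2) with hD
    have hD0 : 0 ≤ D := by positivity
    have hp2a : (∫ τ in (t/2)..t, (1 + (t - τ)^2) ^ (-(σ₁/2)) * τ ^ (-(1/2:ℝ))
          * (1 + τ^2) ^ ((1/2 - σ₂)/2))
        ≤ D * ∫ τ in (t/2)..t, (1 + (t - τ)^2) ^ (-(σ₁/2)) := by
      rw [← intervalIntegral.integral_const_mul]
      apply intervalIntegral.integral_mono_on hhalft I2
      · apply Continuous.intervalIntegrable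
        apply Continuous.mul continuous_const
        apply Continuous.rpow_const (by fun_prop)
        intro x; left; nlinarith [sq_nonneg (t-x)]
      intro τ hτ
      have hτ0 : (0:ℝ) < τ := lt_of_lt_of_le ht0' hτ.1
      have hb : τ ^ (-(1/2:ℝ)) ≤ (t/2) ^ (-(1/2:ℝ)) :=
        Real.rpow_le_rpow_of_nonpos ht0' hτ.1 (by norm_num)
      have hcc : (1 + τ^2) ^ ((1/2-σ₂)/2) ≤ ((1+t^2)/4) ^ ((1/2-σ₂)/2) := by
        apply Real.rpow_le_rpow_of_nonpos (by positivity) ?_ (by linarith)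
        nlinarith [mul_nonneg (sub_nonneg.mpr hτ.1) (show (0:ℝ) ≤ τ + t/2 by linarith)]
      have hbc : τ ^ (-(1/2:ℝ)) * (1 + τ^2) ^ ((1/2-σ₂)/2) ≤ D := by
        rw [hD]
        apply mul_le_mul hb hcc (Real.rpow_nonneg (by nlinarith [sq_nonneg τ]) _)
          (Real.rpow_nonneg hhalf _)
      have ha0 : (0:ℝ) ≤ (1 + (t - τ)^2) ^ (-(σ₁/2)) :=
        Real.rpow_nonneg (by nlinarith [sq_nonneg (t-τ)]) _
      nlinarith [mul_le_mul_of_nonneg_left hbc ha0]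
    have hsub : (∫ τ in (t/2)..t, (1 + (t - τ)^2) ^ (-(σ₁/2)))
        = ∫ s in (0:ℝ)..t/2, (1+s^2) ^ (-(σ₁/2)) := by
      have h := intervalIntegral.integral_comp_sub_left (a := t/2) (b := t)
        (fun s => (1+s^2) ^ (-(σ₁/2))) t
      rw [sub_self, show t - t/2 = t/2 by ring] at h
      exact h
    have hDle : D ≤ 2 ^ ((3:ℝ)/4) * (1+t^2) ^ (-(1/4:ℝ))
        * (4 ^ ((σ₂-1/2)/2) * (1+t^2) ^ ((1/2-σ₂)/2)) := by
      have e1 : ((2:ℝ)*t^2) ^ (-(1/4:ℝ)) ≤ (1+t^2) ^ (-(1/4:ℝ)) :=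
        Real.rpow_le_rpow_of_nonpos (by positivity) (by nlinarith) (by norm_num)
      have h2a : (2:ℝ) ^ ((3:ℝ)/4) * 2 ^ (-(1/4:ℝ)) = 2 ^ ((1:ℝ)/2) := by
        rw [← Real.rpow_add (by norm_num)]; norm_num
      have h3 : t ^ (-(1/2:ℝ)) / 2 ^ (-(1/2:ℝ)) = 2 ^ ((1:ℝ)/2) * t ^ (-(1/2:ℝ)) := by
        rw [Real.rpow_neg (show (0:ℝ) ≤ 2 by norm_num), div_eq_mul_inv, inv_inv]
        ring
      have e2 : (t/2 : ℝ) ^ (-(1/2:ℝ)) = 2 ^ ((3:ℝ)/4) * ((2:ℝ)*t^2) ^ (-(1/4:ℝ)) := by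
        rw [Real.div_rpow (by linarith) (by norm_num),
          Real.mul_rpow (by norm_num) (by positivity),
          ← Real.rpow_natCast t 2, ← Real.rpow_mul (by linarith),
          show ((2:ℕ):ℝ) * -(1/4) = -(1/2) by norm_num, h3, ← mul_assoc, h2a]
      have comp1 : (t/2 : ℝ) ^ (-(1/2:ℝ)) ≤ 2 ^ ((3:ℝ)/4) * (1+t^2) ^ (-(1/4:ℝ)) := by
        rw [e2]; exact mul_le_mul_of_nonneg_left e1 (by positivity)
      have comp2 : ((1+t^2)/4 : ℝ) ^ ((1/2-σ₂)/2)
          = 4 ^ ((σ₂-1/2)/2) * (1+t^2) ^ ((1/2-σ₂)/2) := by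
        rw [Real.div_rpow hX0.le (by norm_num),
          show ((1:ℝ)/2-σ₂)/2 = -((σ₂-1/2)/2) by ring,
          Real.rpow_neg (show (0:ℝ) ≤ 4 by norm_num), div_eq_mul_inv, inv_inv]
        ring
      rw [hD, comp2]
      apply mul_le_mul_of_nonneg_right comp1 (by positivity)
    have hpiece2 : (∫ τ in (t/2)..t, (1 + (t - τ)^2) ^ (-(σ₁/2)) * τ ^ (-(1/2:ℝ))
          * (1 + τ^2) ^ ((1/2 - σ₂)/2)) ≤ C2 * (1+t^2) ^ (-(σ₁/2)) := by
      have htl := htail t ht1.le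
      have hint0 : (0:ℝ) ≤ ∫ s in (0:ℝ)..t/2, (1+s^2) ^ (-(σ₁/2)) := by
        apply intervalIntegral.integral_nonneg hhalf
        intro s _; exact Real.rpow_nonneg (by positivity) _
      calc (∫ τ in (t/2)..t, (1 + (t - τ)^2) ^ (-(σ₁/2)) * τ ^ (-(1/2:ℝ))
            * (1 + τ^2) ^ ((1/2 - σ₂)/2))
          ≤ D * ∫ s in (0:ℝ)..t/2, (1+s^2) ^ (-(σ₁/2)) := by rw [← hsub]; exact hp2a
        _ ≤ D * (c₃ * (1+t^2) ^ ((σ₂-σ₁)/2)) := mul_le_mul_of_nonneg_left htl hD0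
        _ ≤ (2 ^ ((3:ℝ)/4) * (1+t^2) ^ (-(1/4:ℝ))
              * (4 ^ ((σ₂-1/2)/2) * (1+t^2) ^ ((1/2-σ₂)/2)))
            * (c₃ * (1+t^2) ^ ((σ₂-σ₁)/2)) := by
            apply mul_le_mul_of_nonneg_right hDle (by positivity)
        _ = C2 * ((1+t^2) ^ (-(1/4:ℝ)) * (1+t^2) ^ ((1/2-σ₂)/2)
              * (1+t^2) ^ ((σ₂-σ₁)/2)) := by rw [hC2]; ring
        _ = C2 * (1+t^2) ^ (-(σ₁/2)) := by
            rw [← Real.rpow_add hX0, ← Real.rpow_add hX0]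
            congr 1
            ring
    rw [hsplit]
    have hn : (0:ℝ) ≤ Csmall * (1+t^2) ^ (-(σ₁/2)) := by positivity
    refine le_trans (add_le_add hpiece1 hpiece2) ?_
    have hexp : (Csmall + C1 + C2) * (1+t^2) ^ (-(σ₁/2))
        = Csmall * (1+t^2) ^ (-(σ₁/2))
          + (C1 * (1+t^2) ^ (-(σ₁/2)) + C2 * (1+t^2) ^ (-(σ₁/2))) := by ring
    rw [hexp]
    exact le_add_of_nonneg_left hn
end
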